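/- Let H be a complex Hilbert space and (eₙ) an orthonormal sequence of eigenvectors of a self-adjoint operator A with eigenvalues ωₙ → ∞, ωₙ > 0. Define 𝒜 on 𝒳 = D(A^{1/2}) × H × D(A^{1/2}) × H (with the natural graph norm) as the block operator 𝒜(u,v,w,z) = (v, −Au − αA^{μ}v − βA^{μ}z, z, −βA^{μ}v − Aw − γA^{θ}z), with α, γ > 0, β ≠ 0, αγ > β², 0 < μ < 1/2, μ ≤ θ ≤ 1. Then for every r ∈ (2μ, 1], limsup_{|λ|→∞} |λ|^r ‖(iλ I − 𝒜)^{−1}‖ = ∞. -/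

import Mathlib

open Filter

/-- optimality of the Gevrey resolvent estimate. The energy space
`𝒳` of the coupled system is described mode-wise: `Ψ n (a,v,c,z)` represents the
vector `(a eₙ, v eₙ, c eₙ, z eₙ)` built from the `n`-th eigenvector `eₙ` of `A`
(eigenvalue `ωₙ → ∞`), so that `‖Ψ n (a,v,c,z)‖² = ωₙ|a|² + |v|² + ωₙ|c|² + |z|²`,
and `R l` is the resolvent `(ilI - 𝒜)⁻¹` of the block operator
`𝒜(u,v,w,z) = (v, -Au - αA^μ v - βA^μ z, z, -βA^μ v - Aw - γA^θ z)`, which on the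
`n`-th mode inverts the explicit matrix below. With `α, γ > 0`, `β ≠ 0`,
`αγ > β²`, `0 < μ < 1/2`, `μ ≤ θ ≤ 1`, for every `r ∈ (2μ, 1]` we have
`limsup_{|λ|→∞} |λ|^r ‖(iλI - 𝒜)⁻¹‖ = ∞`. -/
theorem stmt_11 {𝒳 : Type*} [NormedAddCommGroup 𝒳] [NormedSpace ℂ 𝒳]
    (ω : ℕ → ℝ) (hωpos : ∀ n, 0 < ω n) (hωtop : Tendsto ω atTop atTop)
    (α β γ μ θ : ℝ) (hα : 0 < α) (hγ : 0 < γ) (hβ : β ≠ 0)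
    (hcoerc : α * γ > β ^ 2)
    (hμ0 : 0 < μ) (hμ : μ < 1 / 2) (hμθ : μ ≤ θ) (hθ : θ ≤ 1)
    (Ψ : ℕ → (ℂ × ℂ × ℂ × ℂ) →ₗ[ℂ] 𝒳)
    (hΨ : ∀ n (a v c z : ℂ),
      ‖Ψ n (a, v, c, z)‖ ^ 2 =
        ω n * ‖a‖ ^ 2 + ‖v‖ ^ 2 + ω n * ‖c‖ ^ 2 + ‖z‖ ^ 2)
    (R : ℝ → 𝒳 →L[ℂ] 𝒳)
    (hR : ∀ (l : ℝ) (n : ℕ) (a v c z : ℂ),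
      R l (Ψ n
        (Complex.I * (l : ℂ) * a - v,
         Complex.I * (l : ℂ) * v + ((ω n : ℝ) : ℂ) * a +
           (((ω n) ^ μ : ℝ) : ℂ) * ((α : ℂ) * v + (β : ℂ) * z),
         Complex.I * (l : ℂ) * c - z,
         Complex.I * (l : ℂ) * z + (β : ℂ) * (((ω n) ^ μ : ℝ) : ℂ) * v +
           ((ω n : ℝ) : ℂ) * c + (γ : ℂ) * (((ω n) ^ θ : ℝ) : ℂ) * z)) =
        Ψ n (a, v, c, z))
    (r : ℝ) (hr : 2 * μ < r) (hr1 : r ≤ 1) :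
    ∀ C Λ : ℝ, ∃ l : ℝ, Λ < |l| ∧ C < |l| ^ r * ‖R l‖ := by
  intro C Λ
  set e := r / 2 - μ with he
  have he0 : 0 < e := by simp only [he]; linarith
  set M : ℝ := max (max 1 (Λ ^ 2)) ((α * max C 1) ^ e⁻¹) with hM
  obtain ⟨n, hn⟩ := (hωtop.eventually_gt_atTop M).exists
  set w := ω n with hwdef
  have hw0 : 0 < w := hωpos n
  have hw1 : 1 < w := lt_of_le_of_lt (le_trans (le_max_left _ _) (le_max_left _ _)) hn
  have hwΛ : Λ ^ 2 < w := lt_of_le_of_lt (le_trans (le_max_right _ _) (le_max_left _ _)) hn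
  have hwC : (α * max C 1) ^ e⁻¹ < w := lt_of_le_of_lt (le_max_right _ _) hn
  set L := Real.sqrt w with hLdef
  have hL0 : 0 < L := Real.sqrt_pos.2 hw0
  have hL2 : L ^ 2 = w := Real.sq_sqrt hw0.le
  set p := w ^ μ with hpdef
  set t := w ^ θ with htdef
  have hp0 : 0 < p := Real.rpow_pos_of_pos hw0 μ
  have ht0 : 0 < t := Real.rpow_pos_of_pos hw0 θ
  have hpt : p ≤ t := (Real.rpow_le_rpow_left_iff hw1).2 hμθ
  have hαγ : 0 < α * γ := mul_pos hα hγ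
  have hcp : β ^ 2 * p < α * γ * t := by
    calc β ^ 2 * p < α * γ * p := by
          exact mul_lt_mul_of_pos_right hcoerc hp0
      _ ≤ α * γ * t := by exact mul_le_mul_of_nonneg_left hpt hαγ.le
  set Dr : ℝ := w * p * (α * γ * t - β ^ 2 * p) with hDrdef
  have hDr0 : 0 < Dr := by
    apply mul_pos (mul_pos hw0 hp0); linarith
  -- mode vector
  set a : ℂ := -Complex.I * γ * L * t with hadef
  set c : ℂ := Complex.I * β * L * p with hcdef
  set v : ℂ := Complex.I * L * a with hvdef
  set z : ℂ := Complex.I * L * c with hzdef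
  have hL2c : ((L : ℂ)) ^ 2 = (w : ℂ) := by
    rw [← hL2]; push_cast; ring
  have key := hR L n a v c z
  have htup :
      (Complex.I * (L : ℂ) * a - v,
        Complex.I * (L : ℂ) * v + ((w : ℝ) : ℂ) * a +
          ((p : ℝ) : ℂ) * ((α : ℂ) * v + (β : ℂ) * z),
        Complex.I * (L : ℂ) * c - z,
        Complex.I * (L : ℂ) * z + (β : ℂ) * ((p : ℝ) : ℂ) * v +
          ((w : ℝ) : ℂ) * c + (γ : ℂ) * ((t : ℝ) : ℂ) * z) =
      ((0 : ℂ), ((Dr : ℝ) : ℂ), (0 : ℂ), (0 : ℂ)) := by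
    refine Prod.ext ?_ (Prod.ext ?_ (Prod.ext ?_ ?_))
    · simp [hvdef]
    · simp only [hDrdef, hvdef, hzdef, hadef, hcdef]
      push_cast
      rw [← hL2c]
      linear_combination (-Complex.I * (γ:ℂ) * (L:ℂ)^3 * (t:ℂ) - (α:ℂ) * (γ:ℂ) * (L:ℂ)^2 * (p:ℂ) * (t:ℂ) + (β:ℂ)^2 * (L:ℂ)^2 * (p:ℂ)^2) * Complex.I_sq
    · simp [hzdef]
    · simp only [hvdef, hzdef, hadef, hcdef]
      push_cast
      rw [← hL2c]
      linear_combination (Complex.I * (β:ℂ) * (L:ℂ)^3 * (p:ℂ)) * Complex.I_sq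
  rw [htup] at key
  -- norms
  have hnormin : ‖Ψ n ((0 : ℂ), ((Dr : ℝ) : ℂ), 0, 0)‖ = Dr := by
    have h := hΨ n 0 ((Dr : ℝ) : ℂ) 0 0
    have h2 : ‖Ψ n ((0 : ℂ), ((Dr : ℝ) : ℂ), 0, 0)‖ ^ 2 = Dr ^ 2 := by
      rw [h]; simp [Complex.norm_real, sq_abs]
    rw [← Real.sqrt_sq (norm_nonneg _), h2, Real.sqrt_sq hDr0.le]
  have hv : ‖v‖ = γ * L ^ 2 * t := by
    simp only [hvdef, hadef]
    simp [norm_mul, Complex.norm_real, abs_of_pos hγ, abs_of_pos hL0, abs_of_pos ht0]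
    ring
  have hout : γ * L ^ 2 * t ≤ ‖Ψ n (a, v, c, z)‖ := by
    rw [← hv]
    have h := hΨ n a v c z
    have h1 : ‖v‖ ^ 2 ≤ ‖Ψ n (a, v, c, z)‖ ^ 2 := by
      rw [h]
      have k1 := mul_nonneg hw0.le (sq_nonneg ‖a‖)
      have k2 := mul_nonneg hw0.le (sq_nonneg ‖c‖)
      have k3 := sq_nonneg ‖z‖
      linarith
    exact le_of_pow_le_pow_left₀ two_ne_zero (norm_nonneg _) h1
  have hRlb : γ * w * t / Dr ≤ ‖R L‖ := by
    have hle := (R L).le_opNorm (Ψ n ((0 : ℂ), ((Dr : ℝ) : ℂ), 0, 0))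
    rw [key, hnormin] at hle
    rw [div_le_iff₀ hDr0]
    calc γ * w * t = γ * L ^ 2 * t := by rw [hL2]
      _ ≤ ‖Ψ n (a, v, c, z)‖ := hout
      _ ≤ ‖R L‖ * Dr := hle
  have hRlb2 : 1 / (α * p) ≤ ‖R L‖ := by
    refine le_trans ?_ hRlb
    rw [div_le_div_iff₀ (mul_pos hα hp0) hDr0, hDrdef]
    nlinarith [mul_nonneg (mul_nonneg hw0.le hp0.le) (mul_nonneg (sq_nonneg β) hp0.le)]
  refine ⟨L, ?_, ?_⟩
  · rw [abs_of_pos hL0]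
    exact lt_of_pow_lt_pow_left₀ 2 hL0.le (by rw [hL2]; exact hwΛ)
  · rw [abs_of_pos hL0]
    have hLr : L ^ r = w ^ (r / 2) := by
      rw [hLdef, Real.sqrt_eq_rpow, ← Real.rpow_mul hw0.le]
      norm_num
      congr 1
      ring
    rw [hLr]
    have h1 : w ^ e / α ≤ w ^ (r / 2) * ‖R L‖ := by
      have heq : w ^ e / α = w ^ (r / 2) * (1 / (α * p)) := by
        rw [he, Real.rpow_sub hw0, ← hpdef]
        field_simp
      rw [heq]
      exact mul_le_mul_of_nonneg_left hRlb2 (Real.rpow_nonneg hw0.le _)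
    have hMC1 : (0:ℝ) < α * max C 1 := mul_pos hα (lt_of_lt_of_le one_pos (le_max_right _ _))
    have h2 : α * max C 1 < w ^ e := by
      have h4 := Real.rpow_lt_rpow (Real.rpow_nonneg hMC1.le _) hwC he0
      rwa [Real.rpow_inv_rpow hMC1.le he0.ne'] at h4
    have h3 : C ≤ max C 1 := le_max_left _ _
    have h5 : max C 1 < w ^ e / α := by
      rw [lt_div_iff₀ hα]; linarith [h2]
    calc C ≤ max C 1 := h3
      _ < w ^ e / α := h5
      _ ≤ w ^ (r / 2) * ‖R L‖ := h1
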